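/- arXiv:2311.00992 — 6 statements merged into one kernel-verified Lean document; each statement's English description precedes it below -/
import Mathlib

section
/- For every even positive integer n, there exists a Latin square of order n that has no orthogonal mate. -/
/-- A Latin square of order `n`: each symbol occurs exactly once in each row
and exactly once in each column. -/
def IsLatinSquare {n : ℕ} (A : Fin n → Fin n → Fin n) : Prop :=
  (∀ i, Function.Bijective fun j => A i j) ∧ (∀ j, Function.Bijective fun i => A i j)

/-- Two Latin squares are orthogonal: every ordered pair of symbols occurs
exactly once among the superimposed pairs. -/
def IsOrthogonal {n : ℕ} (A B : Fin n → Fin n → Fin n) : Prop :=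
  ∀ p : Fin n × Fin n, ∃! q : Fin n × Fin n, (A q.1 q.2, B q.1 q.2) = p


/-!
In the cyclic square `i + j` over `ℤ/nℤ` a transversal is a permutation `σ` with `i ↦ i + σ i`
bijective, so summing over all `i` gives `S = S + S` for the sum `S` of all elements, i.e. `S = 0`.
For `n = 2k`, however, `S = k(2k-1) ≡ k ≠ 0 (mod 2k)`. An orthogonal mate `B` always yields a
transversal: the cells in which `B` takes a fixed symbol.
-/

open Finset

def HasTransversal {α β : Type*} (A : α → α → β) : Prop :=
  ∃ σ : Equiv.Perm α, Function.Bijective fun i => A i (σ i)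

theorem IsOrthogonal.hasTransversal {n : ℕ} {A B : Fin n → Fin n → Fin n}
    (hAB : IsOrthogonal A B) (hB : IsLatinSquare B) (t : Fin n) : HasTransversal A := by
  let col : Fin n → Fin n := fun i => (Equiv.ofBijective _ (hB.1 i)).symm t
  have hcol : ∀ i, B i (col i) = t := fun i => (Equiv.ofBijective _ (hB.1 i)).apply_symm_apply t
  have hcol_inj : Function.Injective col := fun i i' h =>
    (hB.2 (col i)).injective <| show B i (col i) = B i' (col i) by rw [hcol, h, hcol]
  refine ⟨Equiv.ofBijective col (Finite.injective_iff_bijective.mp hcol_inj),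
    Finite.injective_iff_bijective.mp fun i i' h => ?_⟩
  simp only [Equiv.ofBijective_apply] at h
  have hcell : (i, col i) = (i', col i') :=
    (hAB (A i (col i), t)).unique (by simp only [hcol]) (by simp only [hcol, ← h])
  exact congrArg Prod.fst hcell

theorem isLatinSquare_add {n : ℕ} [NeZero n] : IsLatinSquare fun i j : Fin n => i + j :=
  ⟨fun i => (Equiv.addLeft i).bijective, fun j => (Equiv.addRight j).bijective⟩

theorem sum_univ_eq_zero_of_hasTransversal_add {G : Type*} [AddCommGroup G] [Fintype G]
    (h : HasTransversal fun a b : G => a + b) : ∑ g : G, g = 0 := by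
  obtain ⟨σ, hσ⟩ := h
  have hS : ∑ g : G, g = ∑ g : G, g + ∑ g : G, g :=
    calc ∑ g : G, g = ∑ g, (g + σ g) := (hσ.sum_comp id).symm
      _ = ∑ g : G, g + ∑ g, σ g := sum_add_distrib
      _ = ∑ g : G, g + ∑ g : G, g := congrArg (∑ g : G, g + ·) (Equiv.sum_comp σ id)
  simpa using hS

open Fin.CommRing in
theorem Fin.sum_univ_eq_natCast {n : ℕ} [NeZero n] :
    ∑ x : Fin n, x = ((n * (n - 1) / 2 : ℕ) : Fin n) := by
  rw [← sum_range_id, Nat.cast_sum, ← Fin.sum_univ_eq_sum_range]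
  simp only [Fin.cast_val_eq_self]

open Fin.CommRing in
theorem Fin.sum_univ_ne_zero_of_even {n : ℕ} [NeZero n] (hn : Even n) : ∑ x : Fin n, x ≠ 0 := by
  obtain ⟨k, rfl⟩ := hn
  have hk : 0 < k := by have := NeZero.pos (k + k); omega
  have hsum : (k + k) * (k + k - 1) / 2 = (k + k) * (k - 1) + k := by
    rw [Nat.div_eq_of_eq_mul_left two_pos]
    obtain ⟨m, rfl⟩ : ∃ m, k = m + 1 := ⟨k - 1, by omega⟩
    rw [show m + 1 + (m + 1) - 1 = 2 * m + 1 by omega, Nat.add_sub_cancel]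
    ring
  rw [Fin.sum_univ_eq_natCast, hsum, Ne, Fin.natCast_eq_zero,
    Nat.dvd_add_right (dvd_mul_right _ _)]
  exact Nat.not_dvd_of_pos_of_lt hk (by omega)

theorem no_orthogonal_mate_even (n : ℕ) (hn : 0 < n) (hev : Even n) :
    ∃ A : Fin n → Fin n → Fin n, IsLatinSquare A ∧
      ∀ B : Fin n → Fin n → Fin n, IsLatinSquare B → ¬ IsOrthogonal A B := by
  have : NeZero n := ⟨hn.ne'⟩
  refine ⟨fun i j => i + j, isLatinSquare_add, fun B hB hAB => ?_⟩
  have hS := sum_univ_eq_zero_of_hasTransversal_add (hAB.hasTransversal hB 0)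
  exact Fin.sum_univ_ne_zero_of_even hev hS
end

section
/- For every positive integer n with n ≡ 1 (mod 4) and n > 1, there exists a Latin square of order n that has no orthogonal mate. -/
lemma aux_add_mod_inj {M c x y : ℕ} (hx : x < M) (hy : y < M)
    (h : (c + x) % M = (c + y) % M) : x = y := by
  have h' : x % M = y % M := Nat.ModEq.add_left_cancel' c h
  rwa [Nat.mod_eq_of_lt hx, Nat.mod_eq_of_lt hy] at h'

lemma aux_sub_mod_inj {M a b₁ b₂ : ℕ} (hb₁ : b₁ < M) (hb₂ : b₂ < M)
    (h : (a + M - b₁) % M = (a + M - b₂) % M) : b₁ = b₂ := by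
  have h2 : ((a + M - b₁) + (b₁ + b₂)) % M = ((a + M - b₂) + (b₁ + b₂)) % M :=
    Nat.ModEq.add_right _ h
  have e1 : (a + M - b₁) + (b₁ + b₂) = (a + M) + b₂ := by omega
  have e2 : (a + M - b₂) + (b₁ + b₂) = (a + M) + b₁ := by omega
  rw [e1, e2] at h2
  exact (aux_add_mod_inj hb₂ hb₁ h2).symm

lemma aux_sub_mod_inj_left {M a₁ a₂ b : ℕ} (ha₁ : a₁ < M) (ha₂ : a₂ < M) (hb : b ≤ M)
    (h : (a₁ + M - b) % M = (a₂ + M - b) % M) : a₁ = a₂ := by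
  have h2 : ((a₁ + M - b) + b) % M = ((a₂ + M - b) + b) % M := Nat.ModEq.add_right _ h
  have e1 : (a₁ + M - b) + b = M + a₁ := by omega
  have e2 : (a₂ + M - b) + b = M + a₂ := by omega
  rw [e1, e2] at h2
  exact aux_add_mod_inj ha₁ ha₂ h2

lemma aux_sub_mod_pos {M a b : ℕ} (ha : a < M) (hb : b < M) (hab : a ≠ b) :
    0 < (a + M - b) % M := by
  rcases le_or_gt b a with h | h
  · have e : a + M - b = (a - b) + M := by omega
    rw [e, Nat.add_mod_right, Nat.mod_eq_of_lt (by omega)]; omega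
  · rw [Nat.mod_eq_of_lt (by omega)]; omega

def latf (m i j : ℕ) : ℕ :=
  if i < m then
    if j < m then (i + j) % m
    else m + ((i + (j - m)) % (m + 1))
  else
    if j < m then m + ((i - m + j) % (m + 1))
    else if i = j then m + ((i - m + m) % (m + 1))
    else (i - m + (m + 1) - (j - m)) % (m + 1) - 1

lemma latf_row_inj {m i j₁ j₂ : ℕ} (hm : 0 < m) (hi : i < 2 * m + 1)
    (hj₁ : j₁ < 2 * m + 1) (hj₂ : j₂ < 2 * m + 1)
    (h : latf m i j₁ = latf m i j₂) : j₁ = j₂ := by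
  unfold latf at h
  by_cases h1 : i < m
  · rw [if_pos h1, if_pos h1] at h
    by_cases hc1 : j₁ < m <;> by_cases hc2 : j₂ < m
    · rw [if_pos hc1, if_pos hc2] at h
      exact aux_add_mod_inj hc1 hc2 h
    · rw [if_pos hc1, if_neg hc2] at h
      have := Nat.mod_lt (i + j₁) hm; omega
    · rw [if_neg hc1, if_pos hc2] at h
      have := Nat.mod_lt (i + j₂) hm; omega
    · rw [if_neg hc1, if_neg hc2] at h
      have h' : (i + (j₁ - m)) % (m + 1) = (i + (j₂ - m)) % (m + 1) := by omega
      have := aux_add_mod_inj (M := m + 1) (c := i) (by omega) (by omega) h'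
      omega
  · rw [if_neg h1, if_neg h1] at h
    by_cases hc1 : j₁ < m <;> by_cases hc2 : j₂ < m
    · rw [if_pos hc1, if_pos hc2] at h
      have h' : (i - m + j₁) % (m + 1) = (i - m + j₂) % (m + 1) := by omega
      exact aux_add_mod_inj (by omega) (by omega) h'
    · rw [if_pos hc1, if_neg hc2] at h
      by_cases hd : i = j₂
      · rw [if_pos hd] at h
        have h' : (i - m + j₁) % (m + 1) = (i - m + m) % (m + 1) := by omega
        have := aux_add_mod_inj (M := m + 1) (c := i - m) (by omega) (by omega) h'
        omega
      · rw [if_neg hd] at h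
        have hb := Nat.mod_lt (i - m + (m + 1) - (j₂ - m)) (show 0 < m + 1 by omega)
        omega
    · rw [if_neg hc1, if_pos hc2] at h
      by_cases hd : i = j₁
      · rw [if_pos hd] at h
        have h' : (i - m + m) % (m + 1) = (i - m + j₂) % (m + 1) := by omega
        have := aux_add_mod_inj (M := m + 1) (c := i - m) (by omega) (by omega) h'
        omega
      · rw [if_neg hd] at h
        have hb := Nat.mod_lt (i - m + (m + 1) - (j₁ - m)) (show 0 < m + 1 by omega)
        omega
    · rw [if_neg hc1, if_neg hc2] at h
      by_cases hd1 : i = j₁ <;> by_cases hd2 : i = j₂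
      · omega
      · rw [if_pos hd1, if_neg hd2] at h
        have hb := Nat.mod_lt (i - m + (m + 1) - (j₂ - m)) (show 0 < m + 1 by omega)
        omega
      · rw [if_neg hd1, if_pos hd2] at h
        have hb := Nat.mod_lt (i - m + (m + 1) - (j₁ - m)) (show 0 < m + 1 by omega)
        omega
      · rw [if_neg hd1, if_neg hd2] at h
        have hp1 := aux_sub_mod_pos (M := m + 1) (a := i - m) (b := j₁ - m)
          (by omega) (by omega) (by omega)
        have hp2 := aux_sub_mod_pos (M := m + 1) (a := i - m) (b := j₂ - m)
          (by omega) (by omega) (by omega)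
        have h' : (i - m + (m + 1) - (j₁ - m)) % (m + 1)
            = (i - m + (m + 1) - (j₂ - m)) % (m + 1) := by omega
        have := aux_sub_mod_inj (M := m + 1) (a := i - m) (by omega) (by omega) h'
        omega

lemma latf_col_inj {m i₁ i₂ j : ℕ} (hm : 0 < m) (hj : j < 2 * m + 1)
    (hi₁ : i₁ < 2 * m + 1) (hi₂ : i₂ < 2 * m + 1)
    (h : latf m i₁ j = latf m i₂ j) : i₁ = i₂ := by
  unfold latf at h
  by_cases hc1 : i₁ < m <;> by_cases hc2 : i₂ < m
  · rw [if_pos hc1, if_pos hc2] at h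
    by_cases h1 : j < m
    · rw [if_pos h1, if_pos h1, Nat.add_comm i₁ j, Nat.add_comm i₂ j] at h
      exact aux_add_mod_inj hc1 hc2 h
    · rw [if_neg h1, if_neg h1] at h
      have h' : (j - m + i₁) % (m + 1) = (j - m + i₂) % (m + 1) := by
        rw [Nat.add_comm (j - m) i₁, Nat.add_comm (j - m) i₂]; omega
      exact aux_add_mod_inj (by omega) (by omega) h'
  · rw [if_pos hc1, if_neg hc2] at h
    by_cases h1 : j < m
    · rw [if_pos h1, if_pos h1] at h
      have := Nat.mod_lt (i₁ + j) hm; omega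
    · rw [if_neg h1, if_neg h1] at h
      by_cases hd : i₂ = j
      · subst hd
        rw [if_pos rfl] at h
        have h' : (i₂ - m + i₁) % (m + 1) = (i₂ - m + m) % (m + 1) := by
          rw [Nat.add_comm (i₂ - m) i₁]; omega
        have := aux_add_mod_inj (M := m + 1) (c := i₂ - m) (by omega) (by omega) h'
        omega
      · rw [if_neg hd] at h
        have hb := Nat.mod_lt (i₂ - m + (m + 1) - (j - m)) (show 0 < m + 1 by omega)
        omega
  · rw [if_neg hc1, if_pos hc2] at h
    by_cases h1 : j < m
    · rw [if_pos h1, if_pos h1] at h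
      have := Nat.mod_lt (i₂ + j) hm; omega
    · rw [if_neg h1, if_neg h1] at h
      by_cases hd : i₁ = j
      · subst hd
        rw [if_pos rfl] at h
        have h' : (i₁ - m + m) % (m + 1) = (i₁ - m + i₂) % (m + 1) := by
          rw [Nat.add_comm i₂ (i₁ - m)] at h; omega
        have := aux_add_mod_inj (M := m + 1) (c := i₁ - m) (by omega) (by omega) h'
        omega
      · rw [if_neg hd] at h
        have hb := Nat.mod_lt (i₁ - m + (m + 1) - (j - m)) (show 0 < m + 1 by omega)
        omega
  · rw [if_neg hc1, if_neg hc2] at h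
    by_cases h1 : j < m
    · rw [if_pos h1, if_pos h1] at h
      have h' : (j + (i₁ - m)) % (m + 1) = (j + (i₂ - m)) % (m + 1) := by
        rw [Nat.add_comm j (i₁ - m), Nat.add_comm j (i₂ - m)]; omega
      have := aux_add_mod_inj (M := m + 1) (c := j) (by omega) (by omega) h'
      omega
    · rw [if_neg h1, if_neg h1] at h
      by_cases hd1 : i₁ = j <;> by_cases hd2 : i₂ = j
      · omega
      · rw [if_pos hd1, if_neg hd2] at h
        have hb := Nat.mod_lt (i₂ - m + (m + 1) - (j - m)) (show 0 < m + 1 by omega)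
        omega
      · rw [if_neg hd1, if_pos hd2] at h
        have hb := Nat.mod_lt (i₁ - m + (m + 1) - (j - m)) (show 0 < m + 1 by omega)
        omega
      · rw [if_neg hd1, if_neg hd2] at h
        have hp1 := aux_sub_mod_pos (M := m + 1) (a := i₁ - m) (b := j - m)
          (by omega) (by omega) (by omega)
        have hp2 := aux_sub_mod_pos (M := m + 1) (a := i₂ - m) (b := j - m)
          (by omega) (by omega) (by omega)
        have h' : (i₁ - m + (m + 1) - (j - m)) % (m + 1)
            = (i₂ - m + (m + 1) - (j - m)) % (m + 1) := by omega
        have := aux_sub_mod_inj_left (M := m + 1) (b := j - m)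
          (by omega) (by omega) (by omega) h'
        omega

lemma latf_lt {m : ℕ} (hm : 0 < m) (i j : ℕ) : latf m i j < 2 * m + 1 := by
  unfold latf
  split_ifs with h1 h2 h3 h4
  · have := Nat.mod_lt (i + j) hm; omega
  · have := Nat.mod_lt (i + (j - m)) (show 0 < m + 1 by omega); omega
  · have := Nat.mod_lt (i - m + j) (show 0 < m + 1 by omega); omega
  · have := Nat.mod_lt (i - m + m) (show 0 < m + 1 by omega); omega
  · have := Nat.mod_lt (i - m + (m + 1) - (j - m)) (show 0 < m + 1 by omega); omega

lemma latf_region {m i j : ℕ} (hm : 0 < m) (hi : i < 2 * m + 1) (hj : j < 2 * m + 1) :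
    m ≤ latf m i j ↔
      ((i < m ∧ m ≤ j) ∨ (m ≤ i ∧ j < m) ∨ (m ≤ i ∧ m ≤ j ∧ i = j)) := by
  unfold latf
  split_ifs with h1 h2 h3 h4
  · have := Nat.mod_lt (i + j) hm; omega
  · omega
  · omega
  · omega
  · have := Nat.mod_lt (i - m + (m + 1) - (j - m)) (show 0 < m + 1 by omega); omega

theorem no_orthogonal_mate_one_mod_four (n : ℕ) (hn : 1 < n) (hmod : n % 4 = 1) :
    ∃ A : Fin n → Fin n → Fin n, IsLatinSquare A ∧
      ∀ B : Fin n → Fin n → Fin n, IsLatinSquare B → ¬ IsOrthogonal A B := by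
  classical
  obtain ⟨k, hk, hk1⟩ : ∃ k, n = 4 * k + 1 ∧ 1 ≤ k := ⟨n / 4, by omega, by omega⟩
  set m := 2 * k with hmdef
  have hm : 0 < m := by omega
  have hfl : ∀ i j : Fin n, latf m i.val j.val < n := fun i j => by
    have := latf_lt (m := m) hm i.val j.val; omega
  have hiv : ∀ i : Fin n, i.val < 2 * m + 1 := fun i => by have := i.isLt; omega
  refine ⟨fun i j => ⟨latf m i.val j.val, hfl i j⟩, ⟨?_, ?_⟩, ?_⟩
  · intro i
    rw [← Finite.injective_iff_bijective]
    intro j₁ j₂ h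
    have h' : latf m i.val j₁.val = latf m i.val j₂.val := congrArg Fin.val h
    exact Fin.ext (latf_row_inj hm (hiv i) (hiv j₁) (hiv j₂) h')
  · intro j
    rw [← Finite.injective_iff_bijective]
    intro i₁ i₂ h
    have h' : latf m i₁.val j.val = latf m i₂.val j.val := congrArg Fin.val h
    exact Fin.ext (latf_col_inj hm (hiv j) (hiv i₁) (hiv i₂) h')
  intro B hB horth
  -- cardinalities of index sets
  have hlow : ((Finset.univ.filter (fun v : Fin n => v.val < m)).card) = m := by
    have e : (Finset.univ.filter (fun v : Fin n => v.val < m))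
        = Finset.Iio (⟨m, by omega⟩ : Fin n) := by
      ext v; simp [Finset.mem_Iio, Fin.lt_def]
    rw [e, Fin.card_Iio]
  have hhigh : ((Finset.univ.filter (fun v : Fin n => m ≤ v.val)).card) = m + 1 := by
    have hsplit := Finset.card_filter_add_card_filter_not
      (s := (Finset.univ : Finset (Fin n))) (p := fun v : Fin n => v.val < m)
    have heq : (Finset.univ.filter (fun v : Fin n => ¬ v.val < m))
        = Finset.univ.filter (fun v : Fin n => m ≤ v.val) := by
      ext v; simp [not_lt]
    rw [heq] at hsplit
    have hcu : (Finset.univ : Finset (Fin n)).card = n := by simp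
    omega
  -- one cell of each symbol-class in each row of the top half
  have hrowcard : ∀ s : Fin n,
      ((Finset.univ.filter
        (fun q : Fin n × Fin n => B q.1 q.2 = s ∧ q.1.val < m)).card) = m := by
    intro s
    refine Eq.trans ?_ hlow
    apply Finset.card_bij (fun q _ => q.1)
    · intro q hq
      simp only [Finset.mem_filter, Finset.mem_univ, true_and] at hq ⊢
      exact hq.2
    · intro q₁ h₁ q₂ h₂ hq
      simp only [Finset.mem_filter, Finset.mem_univ, true_and] at h₁ h₂
      have e : B q₁.1 q₁.2 = B q₂.1 q₂.2 := h₁.1.trans h₂.1.symm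
      rw [← hq] at e
      have e2 : q₁.2 = q₂.2 := (hB.1 q₁.1).1 e
      exact Prod.ext hq e2
    · intro i hi
      simp only [Finset.mem_filter, Finset.mem_univ, true_and] at hi
      obtain ⟨j, hj⟩ := (hB.1 i).2 s
      exact ⟨(i, j), by simp only [Finset.mem_filter, Finset.mem_univ, true_and]; exact ⟨hj, hi⟩, rfl⟩
  have hcolcard : ∀ s : Fin n,
      ((Finset.univ.filter
        (fun q : Fin n × Fin n => B q.1 q.2 = s ∧ q.2.val < m)).card) = m := by
    intro s
    refine Eq.trans ?_ hlow
    apply Finset.card_bij (fun q _ => q.2)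
    · intro q hq
      simp only [Finset.mem_filter, Finset.mem_univ, true_and] at hq ⊢
      exact hq.2
    · intro q₁ h₁ q₂ h₂ hq
      simp only [Finset.mem_filter, Finset.mem_univ, true_and] at h₁ h₂
      have e : B q₁.1 q₁.2 = B q₂.1 q₂.2 := h₁.1.trans h₂.1.symm
      rw [← hq] at e
      have e2 : q₁.1 = q₂.1 := (hB.2 q₁.2).1 e
      exact Prod.ext e2 hq
    · intro j hj
      simp only [Finset.mem_filter, Finset.mem_univ, true_and] at hj
      obtain ⟨i, hi⟩ := (hB.2 j).2 s
      exact ⟨(i, j), by simp only [Finset.mem_filter, Finset.mem_univ, true_and]; exact ⟨hi, hj⟩, rfl⟩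
  -- each symbol-class contains exactly m+1 cells with large latf value
  have hsymcard : ∀ s : Fin n,
      ((Finset.univ.filter
        (fun q : Fin n × Fin n => B q.1 q.2 = s ∧ m ≤ latf m q.1.val q.2.val)).card) = m + 1 := by
    intro s
    refine Eq.trans ?_ hhigh
    apply Finset.card_bij (fun q _ => (⟨latf m q.1.val q.2.val, hfl q.1 q.2⟩ : Fin n))
    · intro q hq
      simp only [Finset.mem_filter, Finset.mem_univ, true_and] at hq ⊢
      exact hq.2
    · intro q₁ h₁ q₂ h₂ hq
      simp only [Finset.mem_filter, Finset.mem_univ, true_and] at h₁ h₂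
      obtain ⟨q₀, -, huniq⟩ := horth ((⟨latf m q₁.1.val q₁.2.val, hfl q₁.1 q₁.2⟩ : Fin n), s)
      have mem₁ : ((⟨latf m q₁.1.val q₁.2.val, hfl q₁.1 q₁.2⟩ : Fin n), B q₁.1 q₁.2)
          = ((⟨latf m q₁.1.val q₁.2.val, hfl q₁.1 q₁.2⟩ : Fin n), s) := by rw [h₁.1]
      have mem₂ : ((⟨latf m q₂.1.val q₂.2.val, hfl q₂.1 q₂.2⟩ : Fin n), B q₂.1 q₂.2)
          = ((⟨latf m q₁.1.val q₁.2.val, hfl q₁.1 q₁.2⟩ : Fin n), s) := by rw [h₂.1, ← hq]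
      have e₁ : q₁ = q₀ := huniq q₁ mem₁
      have e₂ : q₂ = q₀ := huniq q₂ mem₂
      exact e₁.trans e₂.symm
    · intro v hv
      simp only [Finset.mem_filter, Finset.mem_univ, true_and] at hv
      obtain ⟨q, hq, -⟩ := horth (v, s)
      have h1 : (⟨latf m q.1.val q.2.val, hfl q.1 q.2⟩ : Fin n) = v := congrArg Prod.fst hq
      have h2 : B q.1 q.2 = s := congrArg Prod.snd hq
      have h3 : latf m q.1.val q.2.val = v.val := congrArg Fin.val h1
      exact ⟨q, by simp only [Finset.mem_filter, Finset.mem_univ, true_and]; exact ⟨h2, by omega⟩, h1⟩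
  -- region splits
  have hTR : ∀ s : Fin n,
      ((Finset.univ.filter
        (fun q : Fin n × Fin n => (B q.1 q.2 = s ∧ q.1.val < m) ∧ q.2.val < m)).card)
      + ((Finset.univ.filter
        (fun q : Fin n × Fin n => (B q.1 q.2 = s ∧ q.1.val < m) ∧ ¬ q.2.val < m)).card) = m := by
    intro s
    have h1 := Finset.card_filter_add_card_filter_not
      (s := Finset.univ.filter (fun q : Fin n × Fin n => B q.1 q.2 = s ∧ q.1.val < m))
      (p := fun q : Fin n × Fin n => q.2.val < m)
    rw [Finset.filter_filter, Finset.filter_filter, hrowcard s] at h1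
    exact h1
  have hBL : ∀ s : Fin n,
      ((Finset.univ.filter
        (fun q : Fin n × Fin n => (B q.1 q.2 = s ∧ q.2.val < m) ∧ q.1.val < m)).card)
      + ((Finset.univ.filter
        (fun q : Fin n × Fin n => (B q.1 q.2 = s ∧ q.2.val < m) ∧ ¬ q.1.val < m)).card) = m := by
    intro s
    have h1 := Finset.card_filter_add_card_filter_not
      (s := Finset.univ.filter (fun q : Fin n × Fin n => B q.1 q.2 = s ∧ q.2.val < m))
      (p := fun q : Fin n × Fin n => q.1.val < m)
    rw [Finset.filter_filter, Finset.filter_filter, hcolcard s] at h1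
    exact h1
  -- region characterization
  have hregion : ∀ q : Fin n × Fin n,
      (m ≤ latf m q.1.val q.2.val) ↔
        ((q.1.val < m ∧ ¬ q.2.val < m) ∨ (¬ q.1.val < m ∧ q.2.val < m) ∨
          (¬ q.1.val < m ∧ ¬ q.2.val < m ∧ q.1 = q.2)) := by
    intro q
    have hr := latf_region (m := m) hm (hiv q.1) (hiv q.2)
    rw [hr, show (q.1 = q.2) ↔ (q.1.val = q.2.val) from Fin.val_inj.symm]
    omega
  -- three-way split of the large-symbol cells
  have hDiag : ∀ s : Fin n,
      ((Finset.univ.filter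
        (fun q : Fin n × Fin n => (B q.1 q.2 = s ∧ q.1.val < m) ∧ ¬ q.2.val < m)).card)
      + ((Finset.univ.filter
        (fun q : Fin n × Fin n => (B q.1 q.2 = s ∧ q.2.val < m) ∧ ¬ q.1.val < m)).card)
      + ((Finset.univ.filter
        (fun q : Fin n × Fin n => B q.1 q.2 = s ∧ ¬ q.1.val < m ∧ ¬ q.2.val < m ∧ q.1 = q.2)).card)
      = m + 1 := by
    intro s
    have e : (Finset.univ.filter
        (fun q : Fin n × Fin n => B q.1 q.2 = s ∧ m ≤ latf m q.1.val q.2.val))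
        = ((Finset.univ.filter
            (fun q : Fin n × Fin n => (B q.1 q.2 = s ∧ q.1.val < m) ∧ ¬ q.2.val < m))
          ∪ (Finset.univ.filter
            (fun q : Fin n × Fin n => (B q.1 q.2 = s ∧ q.2.val < m) ∧ ¬ q.1.val < m)))
          ∪ (Finset.univ.filter
            (fun q : Fin n × Fin n => B q.1 q.2 = s ∧ ¬ q.1.val < m ∧ ¬ q.2.val < m ∧ q.1 = q.2)) := by
      ext q
      simp only [Finset.mem_filter, Finset.mem_union, Finset.mem_univ, true_and, hregion q]
      tauto
    have d1 : Disjoint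
        (Finset.univ.filter
          (fun q : Fin n × Fin n => (B q.1 q.2 = s ∧ q.1.val < m) ∧ ¬ q.2.val < m))
        (Finset.univ.filter
          (fun q : Fin n × Fin n => (B q.1 q.2 = s ∧ q.2.val < m) ∧ ¬ q.1.val < m)) := by
      rw [Finset.disjoint_left]
      intro q hq1 hq2
      simp only [Finset.mem_filter, Finset.mem_univ, true_and] at hq1 hq2
      exact hq2.2 hq1.1.2
    have d2 : Disjoint
        ((Finset.univ.filter
          (fun q : Fin n × Fin n => (B q.1 q.2 = s ∧ q.1.val < m) ∧ ¬ q.2.val < m))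
        ∪ (Finset.univ.filter
          (fun q : Fin n × Fin n => (B q.1 q.2 = s ∧ q.2.val < m) ∧ ¬ q.1.val < m)))
        (Finset.univ.filter
          (fun q : Fin n × Fin n => B q.1 q.2 = s ∧ ¬ q.1.val < m ∧ ¬ q.2.val < m ∧ q.1 = q.2)) := by
      rw [Finset.disjoint_left]
      intro q hq1 hq2
      simp only [Finset.mem_union, Finset.mem_filter, Finset.mem_univ, true_and] at hq1 hq2
      rcases hq1 with h | h
      · exact hq2.2.1 h.1.2
      · exact hq2.2.2.1 h.1.2
    have hcard := hsymcard s
    rw [e, Finset.card_union_of_disjoint d2, Finset.card_union_of_disjoint d1] at hcard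
    exact hcard
  -- per-class lower bound on block cells
  have hts : ∀ s : Fin n, k ≤
      ((Finset.univ.filter
        (fun q : Fin n × Fin n => (B q.1 q.2 = s ∧ q.1.val < m) ∧ q.2.val < m)).card) := by
    intro s
    have h1 := hTR s
    have h2 := hBL s
    have h3 := hDiag s
    have e12 : (Finset.univ.filter
        (fun q : Fin n × Fin n => (B q.1 q.2 = s ∧ q.2.val < m) ∧ q.1.val < m))
        = (Finset.univ.filter
        (fun q : Fin n × Fin n => (B q.1 q.2 = s ∧ q.1.val < m) ∧ q.2.val < m)) := by
      ext q
      simp only [Finset.mem_filter, Finset.mem_univ, true_and]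
      tauto
    rw [e12] at h2
    omega
  -- the block has m * m cells, counted fiberwise
  have hfiber := Finset.card_eq_sum_card_fiberwise
    (s := Finset.univ.filter (fun q : Fin n × Fin n => q.1.val < m ∧ q.2.val < m))
    (t := (Finset.univ : Finset (Fin n)))
    (f := fun q : Fin n × Fin n => B q.1 q.2)
    (fun _ _ => Finset.mem_univ _)
  have hblock : (Finset.univ.filter
      (fun q : Fin n × Fin n => q.1.val < m ∧ q.2.val < m)).card = m * m := by
    have hp := Finset.filter_product (s := (Finset.univ : Finset (Fin n)))
      (t := (Finset.univ : Finset (Fin n)))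
      (fun a : Fin n => a.val < m) (fun a : Fin n => a.val < m)
    rw [Finset.univ_product_univ] at hp
    rw [hp, Finset.card_product, hlow]
  rw [hblock] at hfiber
  have hsumeq : ∑ s : Fin n,
      ((Finset.univ.filter (fun q : Fin n × Fin n => q.1.val < m ∧ q.2.val < m)).filter
        (fun q : Fin n × Fin n => B q.1 q.2 = s)).card
      = ∑ s : Fin n, ((Finset.univ.filter
        (fun q : Fin n × Fin n => (B q.1 q.2 = s ∧ q.1.val < m) ∧ q.2.val < m)).card) :=
    Finset.sum_congr rfl (fun s _ => congrArg Finset.card (by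
      ext q
      simp only [Finset.mem_filter, Finset.mem_univ, true_and]
      tauto))
  have hfiber2 := hfiber.trans hsumeq
  have hsum2 : ∑ s : Fin n, (k : ℕ) ≤ ∑ s : Fin n,
      ((Finset.univ.filter
        (fun q : Fin n × Fin n => (B q.1 q.2 = s ∧ q.1.val < m) ∧ q.2.val < m)).card) := by
    apply Finset.sum_le_sum
    intro s _
    exact hts s
  have hconst : ∑ _s : Fin n, (k : ℕ) = n * k := by
    rw [Finset.sum_const, Finset.card_univ, Fintype.card_fin, smul_eq_mul]
  have hfinal : n * k ≤ m * m := by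
    rw [hfiber2, ← hconst]
    exact hsum2
  have h1 : n * k = 4 * (k * k) + k := by rw [hk]; ring
  have h2 : m * m = 4 * (k * k) := by rw [hmdef]; ring
  rw [h1, h2] at hfinal
  have h4 : k ≤ 0 := by
    have h3 : 4 * (k * k) + k ≤ 4 * (k * k) + 0 := by simpa using hfinal
    exact Nat.le_of_add_le_add_left h3
  omega
end

section
/- Every k×n Latin rectangle with 0 ≤ k ≤ n can be completed to a Latin square of order n, i.e., there exists a Latin square of order n whose first k rows coincide with the given Latin rectangle. -/
/-- A `k × n` Latin rectangle: no symbol occurs more than once in any row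
or in any column. -/
def IsLatinRect {k n : ℕ} (A : Fin k → Fin n → Fin n) : Prop :=
  (∀ i, Function.Injective fun j => A i j) ∧ (∀ j, Function.Injective fun i => A i j)

/-!
A `k × n` Latin rectangle with `k < n` can always be extended by one row: let `S j` be the set
of the `n - k` symbols missing from column `j`. Each symbol occurs once in every row, hence in
exactly `k` columns, so it is missing from exactly `n - k` columns. The set system `S` is thus
`(n - k)`-regular, double counting gives Hall's condition, and a system of distinct
representatives of `S` is a new row. Adding rows until there are `n` of them gives an `n × n`
Latin rectangle, which is a Latin square since injective maps `Fin n → Fin n` are bijective.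
-/

open Finset

theorem Finset.exists_injective_of_card_le_of_card_filter_mem_le {ι α : Type*} [Fintype ι]
    [DecidableEq α] (S : ι → Finset α) {r : ℕ} (hr : 0 < r) (hS : ∀ i, r ≤ #(S i))
    (hdeg : ∀ a, #{i | a ∈ S i} ≤ r) :
    ∃ f : ι → α, Function.Injective f ∧ ∀ i, f i ∈ S i := by
  refine (all_card_le_biUnion_card_iff_exists_injective S).mp fun T ↦ ?_
  refine Nat.le_of_mul_le_mul_right ?_ hr
  refine card_mul_le_card_mul (fun i a ↦ a ∈ S i) (fun i hi ↦ ?_) (fun a _ ↦ ?_)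
  · exact (hS i).trans <|
      card_le_card fun a ha ↦ mem_filter.mpr ⟨mem_biUnion.mpr ⟨i, hi, ha⟩, ha⟩
  · exact (card_le_card (filter_subset_filter _ (subset_univ T))).trans (hdeg a)

def freeSymbols {k n : ℕ} (A : Fin k → Fin n → Fin n) (j : Fin n) : Finset (Fin n) :=
  (univ.image (A · j))ᶜ

namespace IsLatinRect

variable {k n : ℕ} {A : Fin k → Fin n → Fin n}

theorem card_freeSymbols (hA : IsLatinRect A) (j : Fin n) : #(freeSymbols A j) = n - k := by
  rw [freeSymbols, card_compl, card_image_of_injective _ (hA.2 j), card_univ, Fintype.card_fin,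
    Fintype.card_fin]

theorem card_filter_mem_freeSymbols_le (hA : IsLatinRect A) (s : Fin n) :
    #{j | s ∈ freeSymbols A j} ≤ n - k := by
  have hrow (i : Fin k) : ∃ j, A i j = s := (Finite.injective_iff_surjective.mp (hA.1 i)) s
  choose col hcol using hrow
  have hcol_inj : Function.Injective col := fun i i' h ↦
    hA.2 (col i) ((hcol i).trans (h ▸ hcol i').symm)
  have hused : k ≤ #{j | s ∉ freeSymbols A j} := by
    simpa using card_le_card_of_injOn (s := univ) col
      (fun i _ ↦ by simpa [freeSymbols] using ⟨i, hcol i⟩) hcol_inj.injOn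
  have := card_filter_add_card_filter_not (s := univ) (fun j ↦ s ∈ freeSymbols A j)
  simp only [card_univ, Fintype.card_fin] at this
  omega

theorem exists_snoc (hA : IsLatinRect A) (hk : k < n) :
    ∃ f : Fin n → Fin n, IsLatinRect (Fin.snoc A f : Fin (k + 1) → Fin n → Fin n) := by
  obtain ⟨f, hf, hfree⟩ := exists_injective_of_card_le_of_card_filter_mem_le (freeSymbols A)
    (Nat.sub_pos_of_lt hk) (fun j ↦ (hA.card_freeSymbols j).ge) hA.card_filter_mem_freeSymbols_le
  refine ⟨f, fun i ↦ ?_, fun j ↦ ?_⟩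
  · induction i using Fin.lastCases with
    | last => simpa using hf
    | cast i => simpa using hA.1 i
  · have hcolumn : (fun i ↦ (Fin.snoc A f : Fin (k + 1) → Fin n → Fin n) i j) =
        Fin.snoc (A · j) (f j) := by
      funext i
      induction i using Fin.lastCases <;> simp
    rw [hcolumn, Fin.snoc_injective_iff]
    exact ⟨hA.2 j, by simpa [freeSymbols] using hfree j⟩

theorem exists_extension (hA : IsLatinRect A) {m : ℕ} (hkm : k ≤ m) (hmn : m ≤ n) :
    ∃ B : Fin m → Fin n → Fin n, IsLatinRect B ∧
      ∀ i j, B (Fin.castLE hkm i) j = A i j := by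
  induction m, hkm using Nat.le_induction with
  | base => exact ⟨A, hA, fun _ _ ↦ rfl⟩
  | succ m hkm ih =>
    obtain ⟨B, hB, hBA⟩ := ih (by omega)
    obtain ⟨f, hf⟩ := hB.exists_snoc (by omega)
    refine ⟨_, hf, fun i j ↦ ?_⟩
    rw [← hBA, show Fin.castLE _ i = (Fin.castLE hkm i).castSucc from rfl, Fin.snoc_castSucc]

theorem isLatinSquare {A : Fin n → Fin n → Fin n} (hA : IsLatinRect A) : IsLatinSquare A :=
  ⟨fun i ↦ Finite.injective_iff_bijective.mp (hA.1 i),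
    fun j ↦ Finite.injective_iff_bijective.mp (hA.2 j)⟩

end IsLatinRect

theorem latin_rect_completion (k n : ℕ) (hk : k ≤ n)
    (A : Fin k → Fin n → Fin n) (hA : IsLatinRect A) :
    ∃ L : Fin n → Fin n → Fin n, IsLatinSquare L ∧
      ∀ (i : Fin k) (j : Fin n), L (Fin.castLE hk i) j = A i j := by
  obtain ⟨L, hL, hLA⟩ := hA.exists_extension hk le_rfl
  exact ⟨L, hL.isLatinSquare, hLA⟩
end

section
/- Every k×n Latin rectangle with k < n can be extended to a (k+1)×n Latin rectangle by appending one additional row. -/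
theorem latin_rect_extension (k n : ℕ) (hk : k < n)
    (A : Fin k → Fin n → Fin n) (hA : IsLatinRect A) :
    ∃ A' : Fin (k + 1) → Fin n → Fin n, IsLatinRect A' ∧
      ∀ i : Fin k, A' i.castSucc = A i := by
  classical
  -- the set of symbols missing from column j
  set t : Fin n → Finset (Fin n) :=
    fun j => Finset.univ \ Finset.image (fun i => A i j) Finset.univ with ht
  have hcardt : ∀ j, (t j).card = n - k := by
    intro j
    rw [ht]
    rw [Finset.card_sdiff_of_subset (Finset.subset_univ _), Finset.card_univ,
      Finset.card_image_of_injective _ (hA.2 j), Finset.card_univ]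
    simp
  -- each symbol is missing from at most n - k columns
  have hmiss : ∀ c : Fin n, (Finset.univ.filter (fun j => c ∈ t j)).card ≤ n - k := by
    intro c
    -- for each row i, the column where c appears in row i
    have hrow : ∀ i : Fin k, ∃ j, A i j = c := by
      intro i
      have : Function.Surjective fun j => A i j :=
        Function.Bijective.surjective (Finite.injective_iff_bijective.mp (hA.1 i))
      exact this c
    choose g hg using hrow
    have hginj : Function.Injective g := by
      intro i₁ i₂ h
      apply hA.2 (g i₁)
      simp only
      rw [hg i₁]; rw [h, hg i₂]
    have hsub : Finset.univ.filter (fun j => c ∈ t j) ⊆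
        Finset.univ \ Finset.image g Finset.univ := by
      intro j hj
      simp only [Finset.mem_filter, ht, Finset.mem_sdiff, Finset.mem_univ, true_and,
        Finset.mem_image] at hj ⊢
      rintro ⟨i, rfl⟩
      exact hj ⟨i, hg i⟩
    calc (Finset.univ.filter (fun j => c ∈ t j)).card
        ≤ (Finset.univ \ Finset.image g Finset.univ).card := Finset.card_le_card hsub
      _ = n - k := by
          rw [Finset.card_sdiff_of_subset (Finset.subset_univ _), Finset.card_univ,
            Finset.card_image_of_injective _ hginj, Finset.card_univ]
          simp
  -- Hall's condition
  have hall : ∀ s : Finset (Fin n), s.card ≤ (s.biUnion t).card := by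
    intro s
    have key : s.card * (n - k) ≤ (s.biUnion t).card * (n - k) := by
      apply Finset.card_mul_le_card_mul (fun j c => c ∈ t j)
      · intro j hj
        have : t j ⊆ (s.biUnion t).bipartiteAbove (fun j c => c ∈ t j) j := by
          intro c hc
          simp only [Finset.mem_bipartiteAbove, Finset.mem_biUnion]
          exact ⟨⟨j, hj, hc⟩, hc⟩
        calc n - k = (t j).card := (hcardt j).symm
          _ ≤ _ := Finset.card_le_card this
      · intro c _
        have : s.bipartiteBelow (fun j c => c ∈ t j) c ⊆
            Finset.univ.filter (fun j => c ∈ t j) := by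
          intro j hj
          simp only [Finset.mem_bipartiteBelow] at hj
          simp [hj.2]
        exact le_trans (Finset.card_le_card this) (hmiss c)
    exact Nat.le_of_mul_le_mul_right key (Nat.sub_pos_of_lt hk)
  obtain ⟨f, hfinj, hf⟩ := (Finset.all_card_le_biUnion_card_iff_exists_injective t).mp hall
  refine ⟨Fin.snoc A f, ⟨?_, ?_⟩, fun i => by simp [Fin.snoc_castSucc]⟩
  · intro i
    refine Fin.lastCases ?_ ?_ i
    · simpa [Fin.snoc_last] using hfinj
    · intro i₀
      simpa [Fin.snoc_castSucc] using hA.1 i₀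
  · intro j i₁ i₂ h
    simp only at h
    have hnot : ∀ i : Fin k, f j ≠ A i j := by
      intro i hne
      have := hf j
      rw [ht] at this
      simp only [Finset.mem_sdiff, Finset.mem_image, Finset.mem_univ, true_and] at this
      exact this ⟨i, hne.symm⟩
    induction i₁ using Fin.lastCases with
    | last =>
      induction i₂ using Fin.lastCases with
      | last => rfl
      | cast a₂ =>
        rw [Fin.snoc_last, Fin.snoc_castSucc] at h
        exact absurd h (hnot a₂)
    | cast a₁ =>
      induction i₂ using Fin.lastCases with
      | last =>
        rw [Fin.snoc_last, Fin.snoc_castSucc] at h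
        exact absurd h.symm (hnot a₁)
      | cast a₂ =>
        rw [Fin.snoc_castSucc, Fin.snoc_castSucc] at h
        exact congrArg Fin.castSucc (hA.2 j h)
end

section
/- Let A be a Latin square of order n, let r ≠ s be two distinct rows, let π_{r,s} be the permutation of {1,…,n} with π_{r,s}(A_{r,i}) = A_{s,i} for all i, and let C ⊆ {1,…,n} be the set of columns involved in one cycle of π_{r,s} (i.e., C = {i : A_{r,i} belongs to a fixed chosen cycle of π_{r,s}}). Then the array A' defined by A'_{r,j} = A_{s,j} for j ∈ C, A'_{s,j} = A_{r,j} for j ∈ C, and A'_{i,j} = A_{i,j} otherwise, is a Latin square of order n. -/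
open Equiv

theorem IsLatinSquare.of_perm_rows_of_perm_cols {n : ℕ} {A B : Fin n → Fin n → Fin n}
    (hA : IsLatinSquare A) (ρ κ : Fin n → Perm (Fin n))
    (hrow : ∀ i j, B i j = ρ i (A i j)) (hcol : ∀ i j, B i j = A (κ j i) j) :
    IsLatinSquare B := by
  refine ⟨fun i => ?_, fun j => ?_⟩
  · simp only [hrow]
    exact (ρ i).bijective.comp (hA.1 i)
  · simp only [hcol]
    exact (hA.2 j).comp (κ j).bijective

namespace Equiv.Perm

variable {α ι : Type*}

theorem cycleOf_apply_eq_ite (π : Perm α) [DecidableRel π.SameCycle] {a b : ι → α} (hπ : ∀ j, π (a j) = b j) (x : α)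
    {C : Finset ι} (hC : ∀ j, j ∈ C ↔ π.SameCycle x (a j)) (j : ι) [Decidable (j ∈ C)] :
    π.cycleOf x (a j) = if j ∈ C then b j else a j := by
  simp only [cycleOf_apply, hC, hπ]

theorem inv_apply_of_apply_eq {π : Perm α} {a b : ι → α} (hπ : ∀ j, π (a j) = b j) (j : ι) :
    π⁻¹ (b j) = a j := by
  rw [inv_eq_iff_eq, hπ]

theorem sameCycle_inv_apply_iff {π : Perm α} {a b : ι → α} (hπ : ∀ j, π (a j) = b j) (x : α)
    (j : ι) : π⁻¹.SameCycle x (b j) ↔ π.SameCycle x (a j) := by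
  rw [sameCycle_inv, ← hπ, sameCycle_apply_right]

end Equiv.Perm

open Equiv.Perm in
theorem row_cycle_switch_general (n : ℕ) (A : Fin n → Fin n → Fin n) (hA : IsLatinSquare A)
    (r s : Fin n) (π : Equiv.Perm (Fin n))
    (hπ : ∀ i : Fin n, π (A r i) = A s i)
    (x : Fin n) (C : Finset (Fin n))
    (hC : ∀ j : Fin n, j ∈ C ↔ π.SameCycle x (A r j)) :
    IsLatinSquare (fun i j =>
      if i = r ∧ j ∈ C then A s j
      else if i = s ∧ j ∈ C then A r j
      else A i j) := by
  have hrow_r := cycleOf_apply_eq_ite π hπ x hC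
  have hrow_s := cycleOf_apply_eq_ite π⁻¹ (inv_apply_of_apply_eq hπ) x
    fun j => (hC j).trans (sameCycle_inv_apply_iff hπ x j).symm
  refine hA.of_perm_rows_of_perm_cols
    (fun i => if i = r then π.cycleOf x else if i = s then π⁻¹.cycleOf x else 1)
    (fun j => if j ∈ C then swap r s else 1) (fun i j => ?_) (fun i j => ?_)
  · by_cases hir : i = r
    · simp [hir, hrow_r]
    by_cases his : i = s
    · subst his
      simp [hir, hrow_s]
    · simp [hir, his]
  · by_cases hj : j ∈ C
    · by_cases hir : i = r
      · simp [hir, hj]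
      by_cases his : i = s
      · subst his
        simp [hir, hj]
      · simp [hir, his, hj, swap_apply_of_ne_of_ne hir his]
    · simp [hj]

theorem row_cycle_switch (n : ℕ) (A : Fin n → Fin n → Fin n) (hA : IsLatinSquare A)
    (r s : Fin n) (hrs : r ≠ s) (π : Equiv.Perm (Fin n))
    (hπ : ∀ i : Fin n, π (A r i) = A s i)
    (x : Fin n) (C : Finset (Fin n))
    (hC : ∀ j : Fin n, j ∈ C ↔ π.SameCycle x (A r j)) :
    IsLatinSquare (fun i j =>
      if i = r ∧ j ∈ C then A s j
      else if i = s ∧ j ∈ C then A r j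
      else A i j) :=
  row_cycle_switch_general n A hA r s π hπ x C hC
end

section
/- For any integer n ≥ 2, there do not exist two Latin squares A and B of order n with r(A, B) = n² − 1, i.e., no two Latin squares of order n produce exactly n² − 1 distinct ordered pairs when superimposed. -/
/-- The number of distinct ordered pairs obtained by superimposing `A` and `B`. -/
def orthCount {k n : ℕ} (A B : Fin k → Fin n → Fin n) : ℕ :=
  (Finset.univ.image fun q : Fin k × Fin n => (A q.1 q.2, B q.1 q.2)).card

theorem no_n_sq_sub_one_orthogonal (n : ℕ) (hn : 2 ≤ n) :
    ¬ ∃ A B : Fin n → Fin n → Fin n,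
        IsLatinSquare A ∧ IsLatinSquare B ∧ orthCount A B = n ^ 2 - 1 := by
  rintro ⟨A, B, hA, hB, hcount⟩
  classical
  set f : Fin n × Fin n → Fin n × Fin n := fun q => (A q.1 q.2, B q.1 q.2) with hf
  set S : Finset (Fin n × Fin n) := Finset.univ.image f with hSdef
  have hS : S.card = n ^ 2 - 1 := hcount
  set m : Fin n × Fin n → ℕ := fun p => (Finset.univ.filter fun q => f q = p).card with hmdef
  have hmem : ∀ p, p ∈ S ↔ 0 < m p := by
    intro p
    simp [hSdef, hmdef, Finset.card_pos, Finset.filter_nonempty_iff]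
  -- row count lemma
  have hrow : ∀ (C : Fin n → Fin n → Fin n), (∀ i, Function.Bijective fun j => C i j) →
      ∀ a, (Finset.univ.filter fun q : Fin n × Fin n => C q.1 q.2 = a).card = n := by
    intro C hC a
    have himg : (Finset.univ.filter fun q : Fin n × Fin n => C q.1 q.2 = a)
        = Finset.univ.image (fun i : Fin n => (i, (Equiv.ofBijective _ (hC i)).symm a)) := by
      ext ⟨i, j⟩
      simp only [Finset.mem_filter, Finset.mem_univ, true_and, Finset.mem_image,
        Prod.mk.injEq]
      constructor
      · intro h
        refine ⟨i, rfl, ?_⟩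
        rw [Equiv.symm_apply_eq]
        exact h.symm
      · rintro ⟨i', rfl, h⟩
        rw [Equiv.symm_apply_eq] at h
        exact h.symm
    rw [himg, Finset.card_image_of_injective _ (fun i i' h => congrArg Prod.fst h),
      Finset.card_univ, Fintype.card_fin]
  have hsum_univ : ∑ p : Fin n × Fin n, m p = n ^ 2 := by
    have h := Finset.card_eq_sum_card_fiberwise
      (s := (Finset.univ : Finset (Fin n × Fin n))) (t := Finset.univ) (f := f)
      (fun x _ => Finset.mem_univ _)
    rw [Finset.card_univ] at h
    simp only [Fintype.card_prod, Fintype.card_fin] at h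
    rw [pow_two]
    exact h.symm ▸ rfl
  -- fiberwise sums along rows of symbols
  have hrowsum : ∀ a : Fin n, ∑ b : Fin n, m (a, b) = n := by
    intro a
    have hfib := Finset.card_eq_sum_card_fiberwise
      (s := Finset.univ.filter fun q : Fin n × Fin n => A q.1 q.2 = a)
      (t := (Finset.univ : Finset (Fin n)))
      (f := fun q => B q.1 q.2) (fun x _ => Finset.mem_univ _)
    rw [hrow A hA.1 a] at hfib
    refine Eq.trans (Finset.sum_congr rfl fun b _ => ?_) hfib.symm
    rw [hmdef, Finset.filter_filter]
    apply congrArg Finset.card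
    ext q
    simp only [Finset.mem_filter, Finset.mem_univ, true_and, hf, Prod.mk.injEq, and_comm]
  have hcolsum : ∀ b : Fin n, ∑ a : Fin n, m (a, b) = n := by
    intro b
    have hfib := Finset.card_eq_sum_card_fiberwise
      (s := Finset.univ.filter fun q : Fin n × Fin n => B q.1 q.2 = b)
      (t := (Finset.univ : Finset (Fin n)))
      (f := fun q => A q.1 q.2) (fun x _ => Finset.mem_univ _)
    rw [hrow B hB.1 b] at hfib
    refine Eq.trans (Finset.sum_congr rfl fun a _ => ?_) hfib.symm
    rw [hmdef, Finset.filter_filter]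
    apply congrArg Finset.card
    ext q
    simp only [Finset.mem_filter, Finset.mem_univ, true_and, hf, Prod.mk.injEq, and_comm]
  have hpos : 0 < n ^ 2 := pow_pos (by omega) 2
  -- the unique missing pair
  have hcompl : Sᶜ.card = 1 := by
    rw [Finset.card_compl, hS]
    simp only [Fintype.card_prod, Fintype.card_fin, ← pow_two]
    omega
  obtain ⟨p₁, hp₁⟩ := Finset.card_eq_one.1 hcompl
  have hp₁notin : p₁ ∉ S := by
    have : p₁ ∈ Sᶜ := hp₁ ▸ Finset.mem_singleton_self p₁
    simpa using this
  have hm₁ : m p₁ = 0 := by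
    have := (hmem p₁).not.1 hp₁notin
    omega
  -- sum over S and the excess sum
  have hsum_S : ∑ p ∈ S, m p = n ^ 2 := by
    rw [← hsum_univ]
    refine Finset.sum_subset (Finset.subset_univ S) fun p _ hp => ?_
    have := (hmem p).not.1 hp
    omega
  have hone : ∑ p ∈ S, (m p - 1) = 1 := by
    have h1 : ∑ p ∈ S, (m p - 1 + 1) = ∑ p ∈ S, m p :=
      Finset.sum_congr rfl fun p hp => Nat.succ_pred_eq_of_pos ((hmem p).1 hp)
    rw [Finset.sum_add_distrib, Finset.sum_const, smul_eq_mul, mul_one, hsum_S, hS] at h1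
    omega
  -- a doubled pair in the row of p₁
  have h2 : ∃ b₀ : Fin n, 2 ≤ m (p₁.1, b₀) := by
    by_contra h
    push_neg at h
    have hz : m (p₁.1, p₁.2) = 0 := by simpa using hm₁
    have hsplit := hrowsum p₁.1
    rw [← Finset.sum_erase_add _ _ (Finset.mem_univ p₁.2)] at hsplit
    have hle : ∑ b ∈ Finset.univ.erase p₁.2, m (p₁.1, b)
        ≤ ∑ _b ∈ Finset.univ.erase p₁.2, 1 :=
      Finset.sum_le_sum fun b _ => by have := h b; omega
    rw [Finset.sum_const, smul_eq_mul, mul_one,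
      Finset.card_erase_of_mem (Finset.mem_univ _), Finset.card_univ, Fintype.card_fin] at hle
    omega
  have h3 : ∃ a₀ : Fin n, 2 ≤ m (a₀, p₁.2) := by
    by_contra h
    push_neg at h
    have hz : m (p₁.1, p₁.2) = 0 := by simpa using hm₁
    have hsplit := hcolsum p₁.2
    rw [← Finset.sum_erase_add _ _ (Finset.mem_univ p₁.1)] at hsplit
    have hle : ∑ a ∈ Finset.univ.erase p₁.1, m (a, p₁.2)
        ≤ ∑ _a ∈ Finset.univ.erase p₁.1, 1 :=
      Finset.sum_le_sum fun a _ => by have := h a; omega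
    rw [Finset.sum_const, smul_eq_mul, mul_one,
      Finset.card_erase_of_mem (Finset.mem_univ _), Finset.card_univ, Fintype.card_fin] at hle
    omega
  obtain ⟨b₀, hb₀⟩ := h2
  obtain ⟨a₀, ha₀⟩ := h3
  have hq₁ : (p₁.1, b₀) ∈ S := (hmem _).2 (by omega)
  have hq₂ : (a₀, p₁.2) ∈ S := (hmem _).2 (by omega)
  have heq : (p₁.1, b₀) = (a₀, p₁.2) := by
    by_contra hne
    have hsub : ({(p₁.1, b₀), (a₀, p₁.2)} : Finset (Fin n × Fin n)) ⊆ S := by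
      intro p hp
      rcases Finset.mem_insert.1 hp with rfl | hp
      · exact hq₁
      · rw [Finset.mem_singleton.1 hp]; exact hq₂
    have hle := Finset.sum_le_sum_of_subset (f := fun p => m p - 1) hsub
    rw [Finset.sum_pair hne] at hle
    beta_reduce at hle
    omega
  have : (p₁.1, b₀) = p₁ := by
    have h1 : b₀ = p₁.2 := (Prod.mk.injEq _ _ _ _ ▸ heq).2
    rw [h1]
  rw [this] at hq₁
  exact hp₁notin hq₁
end
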